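/- arXiv:2004.14882 — 4 statements merged into one kernel-verified Lean document; each statement's English description precedes it below -/
import Mathlib

section
/- Let K ⊆ ℝ^p be nonempty, closed and convex, F : ℝ^p → ℝ differentiable, G : ℝ^p → ℝ convex, and F̃ : K × K → ℝ such that for each y ∈ K, x ↦ F̃(x; y) is μ-strongly convex and differentiable with ∇₁F̃(y; y) = ∇F(y). Define x̂(y) := argmin_{x ∈ K} F̃(x; y) + G(x). Then y ∈ K is a fixed point of x̂ (i.e., x̂(y) = y) if and only if y is a stationary point of the problem min_{x∈K} F(x) + G(x), i.e., ⟨∇F(y), x − y⟩ + G(x) − G(y) ≥ 0 for all x ∈ K. -/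
/-
The surrogate `F̃(·; y)` is convex and has the gradient of `F` at `y`, so `y` minimizes
`F̃(·; y) + G` over `K` exactly when the variational inequality of the original problem holds at
`y`; by strict convexity this minimizer is unique, hence it is `x̂(y)`. Both directions of that
equivalence come from differentiating at `t = 0` along the segment `t ↦ y + t (x - y)`, where
convexity bounds `G` (resp. `F̃(·; y)`) by its chord.
-/

open Set

lemma IsMinOn.hasDerivAt_nonneg {ψ : ℝ → ℝ} {c : ℝ} (hmin : IsMinOn ψ (Icc 0 1) 0)
    (hψ : HasDerivAt ψ c 0) : 0 ≤ c := by
  have hone : (1 : ℝ) ∈ posTangentConeAt (Icc 0 1) 0 :=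
    mem_posTangentConeAt_of_segment_subset (by simp [segment_eq_Icc])
  simpa using hmin.localize.hasFDerivWithinAt_nonneg hψ.hasDerivWithinAt.hasFDerivWithinAt hone

section ConvexFirstOrder

variable {E : Type*} [NormedAddCommGroup E] [NormedSpace ℝ E] {s : Set E} {φ G : E → ℝ}
  {φ' : StrongDual ℝ E} {x y : E}

lemma ConvexOn.apply_add_smul_sub_le (hG : ConvexOn ℝ s G) (hx : x ∈ s) (hy : y ∈ s) {t : ℝ}
    (ht : t ∈ Icc 0 1) : G (x + t • (y - x)) ≤ G x + t * (G y - G x) := by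
  have h := hG.2 hx hy (sub_nonneg.2 ht.2) ht.1 (sub_add_cancel 1 t)
  rw [show (1 - t) • x + t • y = x + t • (y - x) by module, smul_eq_mul, smul_eq_mul] at h
  linarith

lemma ConvexOn.apply_add_le_of_hasFDerivAt (hφ : ConvexOn ℝ s φ) (hx : x ∈ s) (hy : y ∈ s)
    (hd : HasFDerivAt φ φ' x) : φ x + φ' (y - x) ≤ φ y := by
  have hmin : IsMinOn (fun t : ℝ => t * (φ y - φ x) - φ (x + t • (y - x))) (Icc 0 1) 0 :=
    fun t ht => by
      have := hφ.apply_add_smul_sub_le hx hy ht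
      simp only [mem_ofPred_eq, zero_mul, zero_smul, add_zero]
      linarith
  have hψ : HasDerivAt (fun t : ℝ => t * (φ y - φ x) - φ (x + t • (y - x)))
      (φ y - φ x - φ' (y - x)) 0 :=
    (hasDerivAt_mul_const _).sub (hd.hasLineDerivAt (y - x))
  linarith [hmin.hasDerivAt_nonneg hψ]

lemma IsMinOn.fderiv_apply_sub_add_sub_nonneg (hmin : IsMinOn (φ + G) s x)
    (hG : ConvexOn ℝ s G) (hx : x ∈ s) (hy : y ∈ s) (hd : HasFDerivAt φ φ' x) :
    0 ≤ φ' (y - x) + G y - G x := by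
  have hψmin : IsMinOn (fun t : ℝ => φ (x + t • (y - x)) + t * (G y - G x)) (Icc 0 1) 0 := by
    intro t ht
    have hle := hmin (hG.1.add_smul_sub_mem hx hy ht)
    have hchord := hG.apply_add_smul_sub_le hx hy ht
    simp only [Pi.add_apply, mem_ofPred_eq, zero_smul, add_zero, zero_mul] at hle ⊢
    linarith
  have hψ : HasDerivAt (fun t : ℝ => φ (x + t • (y - x)) + t * (G y - G x))
      (φ' (y - x) + (G y - G x)) 0 :=
    (hd.hasLineDerivAt (y - x)).add (hasDerivAt_mul_const _)
  linarith [hψmin.hasDerivAt_nonneg hψ]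

lemma isMinOn_add_iff_fderiv_apply_sub_add_sub_nonneg (hφ : ConvexOn ℝ s φ)
    (hG : ConvexOn ℝ s G) (hx : x ∈ s) (hd : HasFDerivAt φ φ' x) :
    IsMinOn (φ + G) s x ↔ ∀ y ∈ s, 0 ≤ φ' (y - x) + G y - G x := by
  refine ⟨fun hmin y hy => hmin.fderiv_apply_sub_add_sub_nonneg hG hx hy hd, fun h y hy => ?_⟩
  have := hφ.apply_add_le_of_hasFDerivAt hx hy hd
  have := h y hy
  simp only [Pi.add_apply, mem_ofPred_eq]
  linarith

end ConvexFirstOrder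

lemma StrictConvexOn.eq_iff_isMinOn {E : Type*} [AddCommGroup E] [Module ℝ E] {s : Set E}
    {f : E → ℝ} (hf : StrictConvexOn ℝ s f) {a b : E} (ha : IsMinOn f s a) (has : a ∈ s)
    (hbs : b ∈ s) : a = b ↔ IsMinOn f s b :=
  ⟨fun hab => hab ▸ ha, fun hb => hf.eq_of_isMinOn ha hb has hbs⟩

open RealInnerProductSpace

theorem stmt1_general {p : ℕ} (K : Set (EuclideanSpace ℝ (Fin p)))
    (hKcv : Convex ℝ K)
    (F' : EuclideanSpace ℝ (Fin p) → EuclideanSpace ℝ (Fin p))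
    (G : EuclideanSpace ℝ (Fin p) → ℝ) (hG : ConvexOn ℝ Set.univ G)
    (Ft : EuclideanSpace ℝ (Fin p) → EuclideanSpace ℝ (Fin p) → ℝ)
    (Ft' : EuclideanSpace ℝ (Fin p) → EuclideanSpace ℝ (Fin p) → EuclideanSpace ℝ (Fin p))
    (μ : ℝ) (hμ : 0 < μ)
    (hsc : ∀ y ∈ K, StrongConvexOn K μ (fun x => Ft x y))
    (hdiff : ∀ y ∈ K, ∀ x, HasGradientAt (fun z => Ft z y) (Ft' x y) x)
    (hconsist : ∀ y ∈ K, Ft' y y = F' y)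
    (xhat : EuclideanSpace ℝ (Fin p) → EuclideanSpace ℝ (Fin p))
    (hxhat : ∀ y ∈ K, xhat y ∈ K ∧
      ∀ x ∈ K, Ft (xhat y) y + G (xhat y) ≤ Ft x y + G x) :
    ∀ y ∈ K, (xhat y = y ↔ ∀ x ∈ K, 0 ≤ ⟪F' y, x - y⟫ + G x - G y) := by
  intro y hy
  have hFt := (hsc y hy).strictConvexOn hμ
  have hGK : ConvexOn ℝ K G := hG.subset (subset_univ K) hKcv
  have hxhat_min : IsMinOn ((fun x => Ft x y) + G) K (xhat y) :=
    fun x hx => (hxhat y hy).2 x hx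
  have hgrad := (hdiff y hy y).hasFDerivAt
  rw [hconsist y hy] at hgrad
  rw [(hFt.add_convexOn hGK).eq_iff_isMinOn hxhat_min (hxhat y hy).1 hy,
    isMinOn_add_iff_fderiv_apply_sub_add_sub_nonneg hFt.convexOn hGK hy hgrad]
  simp only [InnerProductSpace.toDual_apply_apply]

theorem stmt1 {p : ℕ} (K : Set (EuclideanSpace ℝ (Fin p)))
    (hKne : K.Nonempty) (hKcl : IsClosed K) (hKcv : Convex ℝ K)
    (F : EuclideanSpace ℝ (Fin p) → ℝ) (F' : EuclideanSpace ℝ (Fin p) → EuclideanSpace ℝ (Fin p))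
    (hF : ∀ x, HasGradientAt F (F' x) x)
    (G : EuclideanSpace ℝ (Fin p) → ℝ) (hG : ConvexOn ℝ Set.univ G)
    (Ft : EuclideanSpace ℝ (Fin p) → EuclideanSpace ℝ (Fin p) → ℝ)
    (Ft' : EuclideanSpace ℝ (Fin p) → EuclideanSpace ℝ (Fin p) → EuclideanSpace ℝ (Fin p))
    (μ : ℝ) (hμ : 0 < μ)
    (hsc : ∀ y ∈ K, StrongConvexOn K μ (fun x => Ft x y))
    (hdiff : ∀ y ∈ K, ∀ x, HasGradientAt (fun z => Ft z y) (Ft' x y) x)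
    (hconsist : ∀ y ∈ K, Ft' y y = F' y)
    (xhat : EuclideanSpace ℝ (Fin p) → EuclideanSpace ℝ (Fin p))
    (hxhat : ∀ y ∈ K, xhat y ∈ K ∧
      ∀ x ∈ K, Ft (xhat y) y + G (xhat y) ≤ Ft x y + G x) :
    ∀ y ∈ K, (xhat y = y ↔ ∀ x ∈ K, 0 ≤ ⟪F' y, x - y⟫ + G x - G y) :=
  stmt1_general K hKcv F' G hG Ft Ft' μ hμ hsc hdiff hconsist xhat hxhat
end

section
/- Let K ⊆ ℝ^p be closed and convex, F̃(·; y) μ-strongly convex and differentiable with ∇₁F̃ L̃-Lipschitz in both arguments, and G convex. Then the best-response map x̂(y) := argmin_{x∈K} F̃(x; y) + G(x) is Lipschitz continuous on K with constant L̃/μ. -/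
/-!
Write `f_y := F̃(·; y) + G`, which is `μ`-strongly convex on `K` with minimiser `x̂(y)`.
Strong convexity at a minimiser gives `f_y x̂(y) + μ/2 ‖x - x̂(y)‖² ≤ f_y x` on `K`; adding this
for `y` at `x̂(y')` and for `y'` at `x̂(y)` yields
`μ ‖x̂(y) - x̂(y')‖² ≤ h(x̂(y')) - h(x̂(y))` with `h := F̃(·; y) - F̃(·; y')`.
The gradient of `h` is bounded by `L̃ ‖y - y'‖`, so the mean value theorem bounds the right-hand
side by `L̃ ‖y - y'‖ ‖x̂(y) - x̂(y')‖`.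
-/

open Set

section StrongConvexity

variable {E : Type*} [NormedAddCommGroup E] [NormedSpace ℝ E] {s : Set E} {m : ℝ} {f g : E → ℝ}

lemma StrongConvexOn.add_convexOn (hf : StrongConvexOn s m f) (hg : ConvexOn ℝ s g) :
    StrongConvexOn s m (f + g) :=
  (hf.add hg.uniformConvexOn_zero).mono fun r => by simp

lemma StrongConvexOn.add_sq_le_of_isMinOn {x z : E} (hf : StrongConvexOn s m f)
    (hmin : IsMinOn f s x) (hx : x ∈ s) (hz : z ∈ s) :
    f x + m / 2 * ‖z - x‖ ^ 2 ≤ f z := by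
  set c := m / 2 * ‖z - x‖ ^ 2 with hc
  have hseg : ∀ t ∈ Ioc (0 : ℝ) 1, f x + (1 - t) * c ≤ f z := by
    rintro t ⟨ht₀, ht₁⟩
    have hconv := hf.2 hz hx ht₀.le (sub_nonneg.2 ht₁) (add_sub_cancel t 1)
    have hle := isMinOn_iff.1 hmin _ (hf.1 hz hx ht₀.le (sub_nonneg.2 ht₁) (add_sub_cancel t 1))
    simp only [smul_eq_mul, ← hc] at hconv
    nlinarith
  -- let `t → 0⁺`
  have h0 : (0 : ℝ) ∈ closure (Ioc 0 1) := by simp [closure_Ioc zero_ne_one]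
  simpa using ContinuousWithinAt.closure_le h0 (by fun_prop) continuousWithinAt_const hseg

lemma StrongConvexOn.norm_sub_le_of_isMinOn {x y : E} {C : ℝ} (hm : 0 < m) (hC : 0 ≤ C)
    (hf : StrongConvexOn s m f) (hg : StrongConvexOn s m g) (hx : x ∈ s) (hy : y ∈ s)
    (hfx : IsMinOn f s x) (hgy : IsMinOn g s y)
    (hfg : (f y - g y) - (f x - g x) ≤ C * ‖x - y‖) :
    ‖x - y‖ ≤ C / m := by
  have hf' := hf.add_sq_le_of_isMinOn hfx hx hy
  have hg' := hg.add_sq_le_of_isMinOn hgy hy hx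
  rw [norm_sub_rev] at hf'
  have hsq : m * ‖x - y‖ * ‖x - y‖ ≤ C * ‖x - y‖ := by nlinarith
  rw [le_div_iff₀ hm]
  rcases (norm_nonneg (x - y)).eq_or_lt with h | h
  · rw [← h, zero_mul]; exact hC
  · exact le_of_mul_le_mul_right (by linarith) h

end StrongConvexity

section Gradient

variable {F : Type*} [NormedAddCommGroup F] [InnerProductSpace ℝ F] [CompleteSpace F]
  {f g : F → ℝ} {f' : F → F}

theorem HasGradientAt.sub {x a b : F} (hf : HasGradientAt f a x) (hg : HasGradientAt g b x) :
    HasGradientAt (fun z => f z - g z) (a - b) x := by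
  rw [hasGradientAt_iff_hasFDerivAt, map_sub]
  exact hf.hasFDerivAt.sub hg.hasFDerivAt

theorem norm_image_sub_le_of_norm_gradient_le {C : ℝ} (hf : ∀ x, HasGradientAt f (f' x) x)
    (bound : ∀ x, ‖f' x‖ ≤ C) (x y : F) : ‖f y - f x‖ ≤ C * ‖y - x‖ :=
  convex_univ.norm_image_sub_le_of_norm_hasFDerivWithin_le
    (fun z _ => (hf z).hasFDerivAt.hasFDerivWithinAt) (fun z _ => by simpa using bound z)
    (mem_univ x) (mem_univ y)

end Gradient

theorem stmt11_general {p : ℕ} (K : Set (EuclideanSpace ℝ (Fin p)))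
    (Ft : EuclideanSpace ℝ (Fin p) → EuclideanSpace ℝ (Fin p) → ℝ)
    (Ft' : EuclideanSpace ℝ (Fin p) → EuclideanSpace ℝ (Fin p) → EuclideanSpace ℝ (Fin p))
    (μ Lt : ℝ) (hμ : 0 < μ) (hLt : 0 < Lt)
    (hsc : ∀ y ∈ K, StrongConvexOn K μ (fun x => Ft x y))
    (hdiff : ∀ y ∈ K, ∀ x, HasGradientAt (fun z => Ft z y) (Ft' x y) x)
    (hlip : ∀ x x' y y', ‖Ft' x y - Ft' x' y'‖ ≤ Lt * (‖x - x'‖ + ‖y - y'‖))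
    (G : EuclideanSpace ℝ (Fin p) → ℝ) (hG : ConvexOn ℝ Set.univ G)
    (xhat : EuclideanSpace ℝ (Fin p) → EuclideanSpace ℝ (Fin p))
    (hxhat : ∀ y ∈ K, xhat y ∈ K ∧
      ∀ x ∈ K, Ft (xhat y) y + G (xhat y) ≤ Ft x y + G x) :
    ∀ y ∈ K, ∀ y' ∈ K, ‖xhat y - xhat y'‖ ≤ (Lt / μ) * ‖y - y'‖ := by
  intro y hy y' hy'
  have hobj : ∀ w ∈ K, StrongConvexOn K μ (fun x => Ft x w + G x) := fun w hw =>
    (hsc w hw).add_convexOn (hG.subset (subset_univ K) (hsc w hw).1)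
  obtain ⟨hxK, hxmin⟩ := hxhat y hy
  obtain ⟨hxK', hxmin'⟩ := hxhat y' hy'
  have hgrad : ∀ z, ‖Ft' z y - Ft' z y'‖ ≤ Lt * ‖y - y'‖ := fun z => by
    simpa using hlip z z y y'
  have hmvt := norm_image_sub_le_of_norm_gradient_le (fun z => (hdiff y hy z).sub (hdiff y' hy' z))
    hgrad (xhat y) (xhat y')
  rw [Real.norm_eq_abs, norm_sub_rev (xhat y')] at hmvt
  rw [div_mul_eq_mul_div]
  refine (hobj y hy).norm_sub_le_of_isMinOn hμ (by positivity) (hobj y' hy') hxK hxK'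
    (isMinOn_iff.2 hxmin) (isMinOn_iff.2 hxmin') ?_
  linarith [le_abs_self (Ft (xhat y') y - Ft (xhat y') y' - (Ft (xhat y) y - Ft (xhat y) y'))]

theorem stmt11 {p : ℕ} (K : Set (EuclideanSpace ℝ (Fin p)))
    (hKne : K.Nonempty) (hKcl : IsClosed K) (hKcv : Convex ℝ K)
    (Ft : EuclideanSpace ℝ (Fin p) → EuclideanSpace ℝ (Fin p) → ℝ)
    (Ft' : EuclideanSpace ℝ (Fin p) → EuclideanSpace ℝ (Fin p) → EuclideanSpace ℝ (Fin p))
    (μ Lt : ℝ) (hμ : 0 < μ) (hLt : 0 < Lt)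
    (hsc : ∀ y ∈ K, StrongConvexOn K μ (fun x => Ft x y))
    (hdiff : ∀ y ∈ K, ∀ x, HasGradientAt (fun z => Ft z y) (Ft' x y) x)
    (hlip : ∀ x x' y y', ‖Ft' x y - Ft' x' y'‖ ≤ Lt * (‖x - x'‖ + ‖y - y'‖))
    (G : EuclideanSpace ℝ (Fin p) → ℝ) (hG : ConvexOn ℝ Set.univ G)
    (xhat : EuclideanSpace ℝ (Fin p) → EuclideanSpace ℝ (Fin p))
    (hxhat : ∀ y ∈ K, xhat y ∈ K ∧
      ∀ x ∈ K, Ft (xhat y) y + G (xhat y) ≤ Ft x y + G x) :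
    ∀ y ∈ K, ∀ y' ∈ K, ‖xhat y - xhat y'‖ ≤ (Lt / μ) * ‖y - y'‖ :=
  stmt11_general K Ft Ft' μ Lt hμ hLt hsc hdiff hlip G hG xhat hxhat
end

section
/- Let K ⊆ ℝ^p be convex, F : ℝ^p → ℝ differentiable, G : ℝ^p → ℝ convex, x ∈ K, and x̂ ∈ K satisfy ⟨∇F(x), x̂ − x⟩ + G(x̂) − G(x) ≤ −μ‖x̂ − x‖² for some μ > 0. If ∇F is L-Lipschitz, then for α ∈ (0,1], U(x + α(x̂ − x)) ≤ U(x) − α(μ − αL/2)‖x̂ − x‖², where U = F + G. In particular, for α < 2μ/L the update strictly decreases U unless x̂ = x. -/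
/-!
The Lipschitz gradient gives the quadratic upper bound
`F y ≤ F x + ⟪∇F x, y - x⟫ + L/2 ‖y - x‖²`, and convexity of `G` bounds `G` on the chord.
At `y = x + α (x̂ - x)` the first-order terms add up to `α (⟪∇F x, x̂ - x⟫ + G x̂ - G x)`,
which the sufficient-decrease hypothesis bounds by `-α μ ‖x̂ - x‖²`; what is left is the
second-order term `α² L/2 ‖x̂ - x‖²`.
-/

open RealInnerProductSpace

section DescentLemma

variable {E : Type*} [NormedAddCommGroup E] [InnerProductSpace ℝ E] [CompleteSpace E]

theorem HasGradientAt.hasDerivAt_comp_add_smul {F : E → ℝ} {g x d : E} {t : ℝ}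
    (h : HasGradientAt F g (x + t • d)) :
    HasDerivAt (fun s : ℝ => F (x + s • d)) ⟪g, d⟫ t := by
  have hline : HasDerivAt (fun s : ℝ => x + s • d) d t := by
    simpa using ((hasDerivAt_id t).smul_const d).const_add x
  simpa [InnerProductSpace.toDual_apply_apply, Function.comp_def] using
    h.hasFDerivAt.comp_hasDerivAt t hline

theorem le_add_inner_add_of_lipschitz_gradient {F : E → ℝ} {F' : E → E} {L : ℝ} {x : E}
    (hF : ∀ z, HasGradientAt F (F' z) z) (hlip : ∀ z, ‖F' z - F' x‖ ≤ L * ‖z - x‖) (y : E) :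
    F y ≤ F x + ⟪F' x, y - x⟫ + L / 2 * ‖y - x‖ ^ 2 := by
  set d := y - x
  set φ : ℝ → ℝ := fun t => F (x + t • d) - t * ⟪F' x, d⟫ - L / 2 * t ^ 2 * ‖d‖ ^ 2
  have hφ : ∀ t, HasDerivAt φ (⟪F' (x + t • d) - F' x, d⟫ - L * t * ‖d‖ ^ 2) t := fun t => by
    have hquad := (((hasDerivAt_pow 2 t).const_mul (L / 2)).mul_const (‖d‖ ^ 2))
    refine (((hF _).hasDerivAt_comp_add_smul.sub
      ((hasDerivAt_id t).mul_const ⟪F' x, d⟫)).sub hquad).congr_deriv ?_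
    simp only [inner_sub_left, Nat.cast_ofNat]
    ring
  have hφ_nonpos : ∀ t > 0, ⟪F' (x + t • d) - F' x, d⟫ - L * t * ‖d‖ ^ 2 ≤ 0 := fun t ht => by
    have hnorm : ‖F' (x + t • d) - F' x‖ ≤ L * t * ‖d‖ := by
      simpa [norm_smul, abs_of_pos ht, mul_assoc] using hlip (x + t • d)
    rw [sub_nonpos]
    calc ⟪F' (x + t • d) - F' x, d⟫ ≤ ‖F' (x + t • d) - F' x‖ * ‖d‖ := real_inner_le_norm _ _
      _ ≤ L * t * ‖d‖ * ‖d‖ := mul_le_mul_of_nonneg_right hnorm (norm_nonneg d)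
      _ = L * t * ‖d‖ ^ 2 := by ring
  have hanti : AntitoneOn φ (Set.Ici 0) := by
    refine antitoneOn_of_hasDerivWithinAt_nonpos (convex_Ici 0)
      (fun t _ => (hφ t).continuousAt.continuousWithinAt)
      (fun t _ => (hφ t).hasDerivWithinAt) fun t ht => ?_
    rw [interior_Ici] at ht
    exact hφ_nonpos t ht
  have h10 : φ 1 ≤ φ 0 := hanti Set.self_mem_Ici (Set.mem_Ici.2 zero_le_one) zero_le_one
  simp only [φ, one_smul, zero_smul, add_zero, add_sub_cancel, d] at h10
  linarith

end DescentLemma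

theorem ConvexOn.le_add_smul_sub {E : Type*} [AddCommGroup E] [Module ℝ E] {s : Set E}
    {G : E → ℝ} (hG : ConvexOn ℝ s G) {x y : E} (hx : x ∈ s) (hy : y ∈ s) {α : ℝ}
    (hα0 : 0 ≤ α) (hα1 : α ≤ 1) :
    G (x + α • (y - x)) ≤ G x + α * (G y - G x) := by
  have hchord := hG.2 hx hy (sub_nonneg.2 hα1) hα0 (sub_add_cancel 1 α)
  rw [show (1 - α) • x + α • y = x + α • (y - x) by module, smul_eq_mul, smul_eq_mul] at hchord
  linarith

theorem stmt12_general {p : ℕ}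
    (F : EuclideanSpace ℝ (Fin p) → ℝ)
    (F' : EuclideanSpace ℝ (Fin p) → EuclideanSpace ℝ (Fin p))
    (hF : ∀ x, HasGradientAt F (F' x) x)
    (G : EuclideanSpace ℝ (Fin p) → ℝ) (hG : ConvexOn ℝ Set.univ G)
    (L : ℝ) (hL : 0 < L)
    (hlip : ∀ a b, ‖F' a - F' b‖ ≤ L * ‖a - b‖)
    (μ : ℝ)
    (x xh : EuclideanSpace ℝ (Fin p))
    (hdesc : ⟪F' x, xh - x⟫ + G xh - G x ≤ -μ * ‖xh - x‖ ^ 2)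
    (α : ℝ) (hα : α ∈ Set.Ioc (0 : ℝ) 1) :
    F (x + α • (xh - x)) + G (x + α • (xh - x)) ≤
        F x + G x - α * (μ - α * L / 2) * ‖xh - x‖ ^ 2 ∧
      (α < 2 * μ / L → xh ≠ x →
        F (x + α • (xh - x)) + G (x + α • (xh - x)) < F x + G x) := by
  obtain ⟨hα0, hα1⟩ := hα
  have hFle := le_add_inner_add_of_lipschitz_gradient hF (hlip · x) (x + α • (xh - x))
  rw [add_sub_cancel_left, inner_smul_right, norm_smul, Real.norm_of_nonneg hα0.le] at hFle
  have hGle := hG.le_add_smul_sub (Set.mem_univ x) (Set.mem_univ xh) hα0.le hα1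
  have hdecrease : F (x + α • (xh - x)) + G (x + α • (xh - x)) ≤
      F x + G x - α * (μ - α * L / 2) * ‖xh - x‖ ^ 2 := by
    linear_combination hFle + hGle + mul_le_mul_of_nonneg_left hdesc hα0.le
  refine ⟨hdecrease, fun hαμ hne => ?_⟩
  have hgap : 0 < μ - α * L / 2 := by
    rw [lt_div_iff₀ hL] at hαμ
    linarith
  have hd : 0 < ‖xh - x‖ := norm_pos_iff.2 (sub_ne_zero.2 hne)
  have := mul_pos (mul_pos hα0 hgap) (pow_pos hd 2)
  linarith

theorem stmt12 {p : ℕ} (K : Set (EuclideanSpace ℝ (Fin p))) (hKcv : Convex ℝ K)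
    (F : EuclideanSpace ℝ (Fin p) → ℝ)
    (F' : EuclideanSpace ℝ (Fin p) → EuclideanSpace ℝ (Fin p))
    (hF : ∀ x, HasGradientAt F (F' x) x)
    (G : EuclideanSpace ℝ (Fin p) → ℝ) (hG : ConvexOn ℝ Set.univ G)
    (L : ℝ) (hL : 0 < L)
    (hlip : ∀ a b, ‖F' a - F' b‖ ≤ L * ‖a - b‖)
    (μ : ℝ) (hμ : 0 < μ)
    (x xh : EuclideanSpace ℝ (Fin p)) (hx : x ∈ K) (hxh : xh ∈ K)
    (hdesc : ⟪F' x, xh - x⟫ + G xh - G x ≤ -μ * ‖xh - x‖ ^ 2)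
    (α : ℝ) (hα : α ∈ Set.Ioc (0 : ℝ) 1) :
    F (x + α • (xh - x)) + G (x + α • (xh - x)) ≤
        F x + G x - α * (μ - α * L / 2) * ‖xh - x‖ ^ 2 ∧
      (α < 2 * μ / L → xh ≠ x →
        F (x + α • (xh - x)) + G (x + α • (xh - x)) < F x + G x) :=
  stmt12_general F F' hF G hG L hL hlip μ x xh hdesc α hα
end

section
/- Let {ρ^t} ⊂ (0,1] with ∑ρ^t = ∞ and ∑(ρ^t)² < ∞, and let {e^t} ⊂ ℝ^p satisfy ∑_t ρ^t‖e^t‖ < ∞. Then the recursion d^{t+1} = (1 − ρ^t)d^t + ρ^t (g + e^t), for fixed g ∈ ℝ^p and arbitrary d^0, satisfies d^t → g. -/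
/-!
With `δ t = ‖d t - g‖` the recursion gives `δ (t+1) ≤ (1 - ρ t) δ t + ρ t ‖e t‖`, so it suffices
to show that a nonnegative real sequence with `a (t+1) ≤ (1 - ρ t) a t + b t`, `∑ b < ∞` and
`∑ ρ = ∞` tends to `0`. Adding the tail `∑_{k ≥ t} b k` to `a t` gives a nonincreasing
sequence which drops by at least `ρ t a t` at each step. Hence it converges, so `a` converges
as well, and `∑ ρ t a t < ∞`; since `∑ ρ = ∞`, the limit of `a` must be `0`.
-/

open Filter Topology Finset

namespace RecursiveAverage

noncomputable def lyapunov (a b : ℕ → ℝ) (t : ℕ) : ℝ :=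
  a t + ∑' k, b (k + t)

variable {ρ a b : ℕ → ℝ}

lemma lyapunov_nonneg (hb0 : ∀ t, 0 ≤ b t) (ha : ∀ t, 0 ≤ a t) (t : ℕ) :
    0 ≤ lyapunov a b t :=
  add_nonneg (ha t) (tsum_nonneg fun _ => hb0 _)

lemma lyapunov_succ_add_le (hb : Summable b)
    (hrec : ∀ t, a (t + 1) ≤ (1 - ρ t) * a t + b t) (t : ℕ) :
    lyapunov a b (t + 1) + ρ t * a t ≤ lyapunov a b t := by
  have htail : ∑' k, b (k + t) = b t + ∑' k, b (k + (t + 1)) := by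
    rw [((summable_nat_add_iff t).mpr hb).tsum_eq_zero_add]
    simp only [zero_add, add_right_comm _ 1 t, add_assoc]
  unfold lyapunov
  linarith [hrec t]

lemma sum_range_mul_le_lyapunov (hb : Summable b)
    (hrec : ∀ t, a (t + 1) ≤ (1 - ρ t) * a t + b t) (n : ℕ) :
    ∑ t ∈ range n, ρ t * a t ≤ lyapunov a b 0 - lyapunov a b n := by
  induction n with
  | zero => simp
  | succ n ih =>
    rw [sum_range_succ]
    linarith [lyapunov_succ_add_le hb hrec n]

lemma tendsto_of_le_one_sub_mul_add (hρ : ∀ t, 0 ≤ ρ t) (hb : Summable b)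
    (hb0 : ∀ t, 0 ≤ b t) (ha : ∀ t, 0 ≤ a t)
    (hrec : ∀ t, a (t + 1) ≤ (1 - ρ t) * a t + b t) :
    ∃ L, Tendsto a atTop (𝓝 L) := by
  have hanti : Antitone (lyapunov a b) := antitone_nat_of_succ_le fun t => by
    linarith [lyapunov_succ_add_le hb hrec t, mul_nonneg (hρ t) (ha t)]
  have hconv := tendsto_atTop_ciInf hanti ⟨0, Set.forall_mem_range.mpr (lyapunov_nonneg hb0 ha)⟩
  refine ⟨_, (hconv.sub (tendsto_sum_nat_add b)).congr fun t => ?_⟩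
  simp [lyapunov]

theorem tendsto_zero_of_le_one_sub_mul_add (hρ : ∀ t, 0 ≤ ρ t) (hρdiv : ¬ Summable ρ)
    (hb : Summable b) (hb0 : ∀ t, 0 ≤ b t) (ha : ∀ t, 0 ≤ a t)
    (hrec : ∀ t, a (t + 1) ≤ (1 - ρ t) * a t + b t) :
    Tendsto a atTop (𝓝 0) := by
  obtain ⟨L, haL⟩ := tendsto_of_le_one_sub_mul_add hρ hb hb0 ha hrec
  have hsum : Summable fun t => ρ t * a t :=
    summable_of_sum_range_le (c := lyapunov a b 0) (fun t => mul_nonneg (hρ t) (ha t))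
      fun n => by linarith [sum_range_mul_le_lyapunov hb hrec n, lyapunov_nonneg hb0 ha n]
  suffices hL : L = 0 from hL ▸ haL
  by_contra hL
  have hLpos : 0 < L := (ge_of_tendsto' haL ha).lt_of_ne' hL
  refine hρdiv ((hsum.div_const (L / 2)).of_norm_bounded_eventually ?_)
  rw [Nat.cofinite_eq_atTop]
  filter_upwards [haL.eventually_const_le (half_lt_self hLpos)] with t ht
  rw [Real.norm_of_nonneg (hρ t), le_div_iff₀ (half_pos hLpos)]
  exact mul_le_mul_of_nonneg_left ht (hρ t)

end RecursiveAverage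

lemma norm_one_sub_smul_add_smul_sub_le {E : Type*} [NormedAddCommGroup E] [NormedSpace ℝ E]
    {r : ℝ} (hr : r ∈ Set.Icc (0 : ℝ) 1) (x g e : E) :
    ‖(1 - r) • x + r • (g + e) - g‖ ≤ (1 - r) * ‖x - g‖ + r * ‖e‖ := by
  have h : (1 - r) • x + r • (g + e) - g = (1 - r) • (x - g) + r • e := by module
  rw [h]
  refine (norm_add_le _ _).trans_eq ?_
  rw [norm_smul, norm_smul, Real.norm_of_nonneg (sub_nonneg.mpr hr.2), Real.norm_of_nonneg hr.1]

theorem stmt17_general {p : ℕ} (ρ : ℕ → ℝ) (hρ : ∀ t, ρ t ∈ Set.Ioc (0 : ℝ) 1)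
    (hρdiv : ¬ Summable ρ)
    (e : ℕ → EuclideanSpace ℝ (Fin p))
    (he : Summable (fun t => ρ t * ‖e t‖))
    (g : EuclideanSpace ℝ (Fin p))
    (d : ℕ → EuclideanSpace ℝ (Fin p))
    (hrec : ∀ t, d (t + 1) = (1 - ρ t) • d t + ρ t • (g + e t)) :
    Filter.Tendsto d Filter.atTop (nhds g) := by
  have hρ0 : ∀ t, 0 ≤ ρ t := fun t => (hρ t).1.le
  rw [tendsto_iff_norm_sub_tendsto_zero]
  refine RecursiveAverage.tendsto_zero_of_le_one_sub_mul_add hρ0 hρdiv he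
    (fun t => mul_nonneg (hρ0 t) (norm_nonneg _)) (fun t => norm_nonneg _) fun t => ?_
  rw [hrec t]
  exact norm_one_sub_smul_add_smul_sub_le (Set.Ioc_subset_Icc_self (hρ t)) _ _ _

theorem stmt17 {p : ℕ} (ρ : ℕ → ℝ) (hρ : ∀ t, ρ t ∈ Set.Ioc (0 : ℝ) 1)
    (hρdiv : ¬ Summable ρ) (hρsq : Summable (fun t => (ρ t) ^ 2))
    (e : ℕ → EuclideanSpace ℝ (Fin p))
    (he : Summable (fun t => ρ t * ‖e t‖))
    (g : EuclideanSpace ℝ (Fin p))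
    (d : ℕ → EuclideanSpace ℝ (Fin p))
    (hrec : ∀ t, d (t + 1) = (1 - ρ t) • d t + ρ t • (g + e t)) :
    Filter.Tendsto d Filter.atTop (nhds g) :=
  stmt17_general ρ hρ hρdiv e he g d hrec
end
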